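/- Let V be a finite-dimensional real vector space and L ⊆ V × V* a Lagrangian subspace. Then ker L = 0 if and only if there exists a linear map π : V* → V with α(π(β)) = −β(π(α)) for all α, β ∈ V* such that L = {(π(α), α) : α ∈ V*}. (Characterization of linear Dirac structures with trivial kernel as graphs of Poisson bivectors.) -/
import Mathlib


/-- A subspace `L ⊆ V × V*` is Lagrangian if it equals its orthogonal
complement with respect to the symmetric pairing
`⟨(v,α),(w,β)⟩ = α(w) + β(v)`. -/
def IsLagrangian {V : Type*} [AddCommGroup V] [Module ℝ V]
    (L : Submodule ℝ (V × Module.Dual ℝ V)) : Prop :=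
  ∀ x : V × Module.Dual ℝ V, x ∈ L ↔ ∀ y ∈ L, x.2 y.1 + y.2 x.1 = 0

/-- A Lagrangian subspace `L ⊆ V × V*` satisfies `ker L = 0` if and only if it
is the graph of a Poisson bivector `π : V* → V`. -/
theorem lagrangian_trivial_kernel_iff_graph_of_poisson
    {V : Type*} [AddCommGroup V] [Module ℝ V] [FiniteDimensional ℝ V]
    (L : Submodule ℝ (V × Module.Dual ℝ V)) (hL : IsLagrangian L) :
    (∀ v : V, (v, (0 : Module.Dual ℝ V)) ∈ L → v = 0) ↔
      ∃ π : Module.Dual ℝ V →ₗ[ℝ] V,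
        (∀ α β : Module.Dual ℝ V, α (π β) = - β (π α)) ∧
        ∀ p : V × Module.Dual ℝ V, p ∈ L ↔ p.1 = π p.2 := by
  constructor
  · intro hker
    -- the projection L → V*
    set p2 : L →ₗ[ℝ] Module.Dual ℝ V :=
      (LinearMap.snd ℝ V (Module.Dual ℝ V)).comp L.subtype with hp2
    have hinj : Function.Injective p2 := by
      intro x y hxy
      have hsub : ((x : V × Module.Dual ℝ V) - y) ∈ L := L.sub_mem x.2 y.2
      have h2 : ((x : V × Module.Dual ℝ V) - y).2 = 0 := by
        have : (x : V × Module.Dual ℝ V).2 = (y : V × Module.Dual ℝ V).2 := hxy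
        simp [this]
      have h1 : ((x : V × Module.Dual ℝ V).1 - (y : V × Module.Dual ℝ V).1) = 0 := by
        apply hker
        have heq : ((x : V × Module.Dual ℝ V) - (y : V × Module.Dual ℝ V)) =
            ((x : V × Module.Dual ℝ V).1 - (y : V × Module.Dual ℝ V).1, 0) := by
          rw [Prod.ext_iff]; exact ⟨rfl, h2⟩
        rwa [heq] at hsub
      exact Subtype.ext (Prod.ext (sub_eq_zero.mp h1) hxy)
    have hsurj : Function.Surjective p2 := by
      have hco : (LinearMap.range p2).dualCoannihilator = ⊥ := by
        rw [Submodule.eq_bot_iff]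
        intro v hv
        rw [Submodule.mem_dualCoannihilator] at hv
        apply hker
        rw [hL]
        intro y hy
        have : (y.2 : Module.Dual ℝ V) v = 0 := hv y.2 ⟨⟨y, hy⟩, rfl⟩
        simpa using this
      have : LinearMap.range p2 = ⊤ := by
        have := Subspace.dualCoannihilator_dualAnnihilator_eq
          (W := LinearMap.range p2)
        rw [hco, Submodule.dualAnnihilator_bot] at this
        exact this.symm
      intro β
      have : β ∈ LinearMap.range p2 := this ▸ Submodule.mem_top
      exact this
    let e : L ≃ₗ[ℝ] Module.Dual ℝ V := LinearEquiv.ofBijective p2 ⟨hinj, hsurj⟩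
    let π : Module.Dual ℝ V →ₗ[ℝ] V :=
      ((LinearMap.fst ℝ V (Module.Dual ℝ V)).comp L.subtype).comp
        (e.symm : Module.Dual ℝ V →ₗ[ℝ] L)
    have hgraph : ∀ β : Module.Dual ℝ V, (π β, β) ∈ L := by
      intro β
      have h2 : ((e.symm β : L) : V × Module.Dual ℝ V).2 = β := e.apply_symm_apply β
      have : ((e.symm β : L) : V × Module.Dual ℝ V) = (π β, β) := by
        rw [Prod.ext_iff]; exact ⟨rfl, h2⟩
      rw [← this]; exact (e.symm β).2
    refine ⟨π, ?_, ?_⟩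
    · intro α β
      have := (hL (π β, β)).mp (hgraph β) (π α, α) (hgraph α)
      simp only at this
      linarith
    · intro p
      constructor
      · intro hp
        have hsub : (p - (π p.2, p.2)) ∈ L := L.sub_mem hp (hgraph p.2)
        have : (p.1 - π p.2, (0 : Module.Dual ℝ V)) ∈ L := by
          have : p - (π p.2, p.2) = (p.1 - π p.2, 0) := by
            rw [Prod.ext_iff]; constructor <;> simp
          rwa [this] at hsub
        exact sub_eq_zero.mp (hker _ this)
      · intro hp
        have := hgraph p.2
        rwa [show p = (π p.2, p.2) from Prod.ext hp rfl]
  · rintro ⟨π, hskew, hgraph⟩ v hv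
    have := (hgraph (v, 0)).mp hv
    simpa using this
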